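/- arXiv:math/0202261 — 4 statements merged into one kernel-verified Lean document; each statement's English description precedes it below -/
import Mathlib

section
/- If φ : π₁(Σ_g) → F_k is a surjective group homomorphism from the fundamental group of a closed orientable surface of genus g to a free group of rank k, then k ≤ g. -/
open scoped commutatorElement in
/-- The canonical surface relator `[a₁,b₁]⋯[a_g,b_g]` in the free group on `2g` generators. -/
def surfaceRel (g : ℕ) : FreeGroup (Fin (2 * g)) :=
  (List.ofFn (fun i : Fin g =>
    ⁅FreeGroup.of (⟨2 * i, by omega⟩ : Fin (2 * g)),
     FreeGroup.of (⟨2 * i + 1, by omega⟩ : Fin (2 * g))⁆)).prod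

/-- The fundamental group of the closed orientable surface of genus `g`. -/
def SurfaceGroup (g : ℕ) : Type :=
  PresentedGroup ({surfaceRel g} : Set (FreeGroup (Fin (2 * g))))

instance (g : ℕ) : Group (SurfaceGroup g) := by unfold SurfaceGroup; infer_instance

/-!
Compose a surjection `π₁(Σ_g) → F_k` with the map from `F_k` to the group of units
`1 + v + m` of the tensor algebra on `ℚᵏ` truncated above degree two. The images `x_j ∈ ℚᵏ` of
the `2g` generators span `ℚᵏ`, since abelianization is surjective, and a commutator `⁅a, b⁆` goes
to the central element `v_a ⊗ v_b - v_b ⊗ v_a`. So the relator `∏ ⁅a_t, b_t⁆` goes to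
`∑ (x_{a_t} ⊗ x_{b_t} - x_{b_t} ⊗ x_{a_t}) = -X J Xᵀ`, where `X` is the matrix with columns `x_j`
and `J` the standard symplectic matrix. Hence `X J Xᵀ = 0`: the `k`-dimensional row space of `X`
is isotropic for the non-degenerate form `J` on `ℚ^{2g}`, and `2k ≤ 2g`.
-/

open Matrix Multiplicative

lemma FreeGroup.toAdd_mem_span_range {α R M : Type*} [Ring R] [AddCommGroup M] [Module R M]
    (f : FreeGroup α →* Multiplicative M) (w : FreeGroup α) :
    toAdd (f w) ∈ Submodule.span R (Set.range fun a => toAdd (f (of a))) := by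
  induction w using FreeGroup.induction_on with
  | C1 => simp
  | of a => exact Submodule.subset_span ⟨a, rfl⟩
  | inv_of a ha => simpa using neg_mem ha
  | mul u w hu hw => simpa using add_mem hu hw

lemma Matrix.two_mul_rank_le_card_of_mul_mul_transpose_eq_zero {K m n : Type*} [Field K]
    [Fintype m] [Fintype n] [DecidableEq n] {A : Matrix m n K} {J : Matrix n n K}
    (hJ : IsUnit J.det) (h : A * J * Aᵀ = 0) : 2 * A.rank ≤ Fintype.card n := by
  have := rank_add_rank_le_card_of_mul_eq_zero h
  rwa [rank_mul_eq_left_of_isUnit_det J A hJ, rank_transpose, ← two_mul] at this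

/-- Units `1 + v + m` of the tensor algebra on `ι → R` truncated above degree two. -/
@[ext] structure Heisenberg (R ι : Type*) where
  v : ι → R
  m : Matrix ι ι R

namespace Heisenberg

section

variable {R ι : Type*} [CommRing R]

instance : Mul (Heisenberg R ι) := ⟨fun a b => ⟨a.v + b.v, a.m + b.m + vecMulVec a.v b.v⟩⟩
instance : One (Heisenberg R ι) := ⟨⟨0, 0⟩⟩
instance : Inv (Heisenberg R ι) := ⟨fun a => ⟨-a.v, -a.m + vecMulVec a.v a.v⟩⟩

@[simp] lemma v_mul (a b : Heisenberg R ι) : (a * b).v = a.v + b.v := rfl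
@[simp] lemma m_mul (a b : Heisenberg R ι) : (a * b).m = a.m + b.m + vecMulVec a.v b.v := rfl
@[simp] lemma v_one : (1 : Heisenberg R ι).v = 0 := rfl
@[simp] lemma m_one : (1 : Heisenberg R ι).m = 0 := rfl
@[simp] lemma v_inv (a : Heisenberg R ι) : a⁻¹.v = -a.v := rfl
@[simp] lemma m_inv (a : Heisenberg R ι) : a⁻¹.m = -a.m + vecMulVec a.v a.v := rfl

instance : Group (Heisenberg R ι) where
  mul_assoc a b c := by ext <;> simp [vecMulVec_apply] <;> ring
  one_mul a := by ext <;> simp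
  mul_one a := by ext <;> simp
  inv_mul_cancel a := by ext <;> simp [vecMulVec_apply]

def vHom : Heisenberg R ι →* Multiplicative (ι → R) where
  toFun a := ofAdd a.v
  map_one' := rfl
  map_mul' _ _ := rfl

def centralHom : Multiplicative (Matrix ι ι R) →* Heisenberg R ι where
  toFun m := ⟨0, toAdd m⟩
  map_one' := rfl
  map_mul' _ _ := by ext <;> simp

open scoped commutatorElement in
lemma commutatorElement_eq (a b : Heisenberg R ι) :
    ⁅a, b⁆ = centralHom (ofAdd (vecMulVec a.v b.v - vecMulVec b.v a.v)) := by
  ext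
  · simp [commutatorElement_def, centralHom]
  · simp only [commutatorElement_def, centralHom, MonoidHom.coe_mk, OneHom.coe_mk, ofAdd_sub,
      toAdd_div, toAdd_ofAdd, m_mul, m_inv, v_mul, v_inv, vecMulVec_neg, add_neg_cancel_comm,
      Matrix.add_apply, Matrix.neg_apply, Matrix.sub_apply, vecMulVec_apply, Pi.add_apply]
    ring

end

variable (R ι : Type*) [CommRing R] [DecidableEq ι]

def ofFreeGroup : FreeGroup ι →* Heisenberg R ι := FreeGroup.lift fun i => ⟨Pi.single i 1, 0⟩

variable {R ι} in
lemma span_range_ofFreeGroup_comp_eq_top [Finite ι] {β : Type*} {ψ : FreeGroup β →* FreeGroup ι}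
    (hψ : Function.Surjective ψ) :
    Submodule.span R (Set.range fun b => (ofFreeGroup R ι (ψ (.of b))).v) = ⊤ := by
  rw [eq_top_iff, ← (Pi.basisFun R ι).span_eq, Submodule.span_le]
  rintro _ ⟨i, rfl⟩
  obtain ⟨w, hw⟩ := hψ (.of i)
  have h := FreeGroup.toAdd_mem_span_range (R := R) ((vHom.comp (ofFreeGroup R ι)).comp ψ) w
  simpa [vHom, ofFreeGroup, hw] using h

end Heisenberg

/-- `inl t` and `inr t` index the generators `a_t = 2t` and `b_t = 2t + 1` of `surfaceRel`. -/
def handleIdx {g : ℕ} : Fin g ⊕ Fin g → Fin (2 * g) :=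
  Sum.elim (fun t => ⟨2 * t, by omega⟩) (fun t => ⟨2 * t + 1, by omega⟩)

lemma handleIdx_surjective (g : ℕ) : Function.Surjective (handleIdx (g := g)) := by
  intro j
  obtain ⟨t, ht | ht⟩ : ∃ t : Fin g, (j : ℕ) = 2 * t ∨ (j : ℕ) = 2 * t + 1 :=
    ⟨⟨j / 2, by omega⟩, by simp only; omega⟩
  · exact ⟨.inl t, Fin.ext ht.symm⟩
  · exact ⟨.inr t, Fin.ext ht.symm⟩

def handleMatrix {R ι : Type*} {g : ℕ} (x : Fin (2 * g) → ι → R) : Matrix ι (Fin g ⊕ Fin g) R :=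
  (Matrix.of fun p => x (handleIdx p))ᵀ

lemma handleMatrix_mul_J_mul_transpose {R ι : Type*} [CommRing R] {g : ℕ}
    (x : Fin (2 * g) → ι → R) :
    handleMatrix x * J (Fin g) R * (handleMatrix x)ᵀ = -∑ t : Fin g,
      (vecMulVec (x (handleIdx (.inl t))) (x (handleIdx (.inr t))) -
        vecMulVec (x (handleIdx (.inr t))) (x (handleIdx (.inl t)))) := by
  ext i j
  simp only [handleMatrix, J, transpose_transpose, Matrix.mul_apply, transpose_apply, of_apply,
    Fintype.sum_sum_type, fromBlocks_apply₁₁, fromBlocks_apply₁₂, fromBlocks_apply₂₁,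
    fromBlocks_apply₂₂, Matrix.zero_apply, Matrix.one_apply, Matrix.neg_apply, Matrix.sub_apply,
    Matrix.sum_apply, vecMulVec_apply, mul_zero, mul_one, mul_neg, neg_mul, mul_ite, zero_add,
    add_zero, neg_sub, Finset.sum_const_zero, Finset.sum_ite_eq', Finset.mem_univ, ↓reduceIte,
    Finset.sum_neg_distrib, Finset.sum_sub_distrib]
  ring

lemma rank_handleMatrix_of_span_eq_top {K : Type*} [Field K] {g k : ℕ}
    {x : Fin (2 * g) → Fin k → K} (hx : Submodule.span K (Set.range x) = ⊤) :
    (handleMatrix x).rank = k := by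
  rw [rank_eq_finrank_span_cols, show (handleMatrix x).col = x ∘ handleIdx from rfl,
    (handleIdx_surjective g).range_comp, hx, finrank_top, Module.finrank_fin_fun]

lemma Heisenberg.map_surfaceRel {R ι : Type*} [CommRing R] {g : ℕ}
    (f : FreeGroup (Fin (2 * g)) →* Heisenberg R ι) :
    f (surfaceRel g) = centralHom (ofAdd (-(handleMatrix (fun j => (f (.of j)).v) *
      J (Fin g) R * (handleMatrix (fun j => (f (.of j)).v))ᵀ))) := by
  rw [handleMatrix_mul_J_mul_transpose, neg_neg]
  simp only [surfaceRel, map_list_prod, List.map_ofFn, Function.comp_def, map_commutatorElement,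
    commutatorElement_eq]
  rw [← Function.comp_def centralHom, ← List.map_ofFn, ← map_list_prod, List.prod_ofFn,
    ← ofAdd_sum]
  rfl

theorem corank_surface_group_le_general (g k : ℕ)
    (φ : SurfaceGroup g →* FreeGroup (Fin k)) (hφ : Function.Surjective φ) :
    k ≤ g := by
  let ψ := φ.comp (PresentedGroup.mk _)
  let θ := (Heisenberg.ofFreeGroup ℚ (Fin k)).comp ψ
  let x j := (θ (.of j)).v
  have hψ : ψ (surfaceRel g) = 1 :=
    (congrArg φ (PresentedGroup.one_of_mem rfl)).trans (map_one φ)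
  have hisotropic : handleMatrix x * J (Fin g) ℚ * (handleMatrix x)ᵀ = 0 := by
    have h := congrArg Heisenberg.m (Heisenberg.map_surfaceRel θ)
    rw [MonoidHom.comp_apply, hψ, map_one] at h
    exact neg_eq_zero.mp h.symm
  have hspan : Submodule.span ℚ (Set.range x) = ⊤ :=
    Heisenberg.span_range_ofFreeGroup_comp_eq_top (hφ.comp (PresentedGroup.mk_surjective _))
  have h := two_mul_rank_le_card_of_mul_mul_transpose_eq_zero (isUnit_det_J _ _) hisotropic
  rw [rank_handleMatrix_of_span_eq_top hspan, Fintype.card_sum, Fintype.card_fin] at h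
  omega

theorem corank_surface_group_le (g k : ℕ) (hg : 1 ≤ g)
    (φ : SurfaceGroup g →* FreeGroup (Fin k)) (hφ : Function.Surjective φ) :
    k ≤ g :=
  corank_surface_group_le_general g k φ hφ
end

section
/- Every finitely generated normal subgroup of a free group of rank 2 is either trivial or of finite index. -/
/-!
The Cayley graph of a free group is a tree, so its geodesics satisfy the tripod property: the
geodesic from `x` to `z` lies in the union of the geodesics from `x` to `y` and from `y` to `z`.
Walking along a product of generators of length at most `L`, it follows that every geodesic from
`1` to an element of a finitely generated subgroup `N` stays within distance `L` of `N`.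
If `N` is normal and contains some `u ≠ 1`, then every `g` is a prefix of the reduced word of
`g (c u c⁻¹) g⁻¹ ∈ N`, for a letter `c` avoiding the three cancellations that could occur; in rank
at least two there are four letters to choose from. Hence every element is within distance `L`
of `N`, and `N` has finite index because balls are finite.
-/

theorem List.exists_maximal_common_prefix {β : Type*} :
    ∀ l m : List β, ∃ c t₁ t₂, l = c ++ t₁ ∧ m = c ++ t₂ ∧ ∀ a ∈ t₁.head?, ∀ b ∈ t₂.head?, a ≠ b
  | a :: l, b :: m => by
    by_cases hab : a = b
    · obtain ⟨c, t₁, t₂, rfl, rfl, h⟩ := exists_maximal_common_prefix l m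
      exact ⟨a :: c, t₁, t₂, by simp, by simp [hab], h⟩
    · exact ⟨[], a :: l, b :: m, rfl, rfl, by simpa using hab⟩
  | [], m => ⟨[], [], m, rfl, rfl, by simp⟩
  | l, [] => ⟨[], l, [], rfl, rfl, by simp⟩

namespace FreeGroup

variable {α : Type*}

def invLetter (a : α × Bool) : α × Bool := (a.1, !a.2)

@[simp]
theorem invLetter_invLetter (a : α × Bool) : invLetter (invLetter a) = a := by
  simp [invLetter]

theorem invLetter_injective : Function.Injective (invLetter (α := α)) :=
  Function.LeftInverse.injective invLetter_invLetter

theorem invRev_eq_reverse_map (L : List (α × Bool)) : invRev L = (L.map invLetter).reverse :=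
  rfl

theorem head?_invRev (L : List (α × Bool)) : (invRev L).head? = L.getLast?.map invLetter := by
  rw [invRev_eq_reverse_map, List.head?_reverse, List.getLast?_map]

theorem getLast?_invRev (L : List (α × Bool)) : (invRev L).getLast? = L.head?.map invLetter := by
  rw [invRev_eq_reverse_map, List.getLast?_reverse, List.head?_map]

theorem isReduced_append {L₁ L₂ : List (α × Bool)} (h₁ : IsReduced L₁) (h₂ : IsReduced L₂)
    (h : ∀ a ∈ L₁.getLast?, ∀ b ∈ L₂.head?, b ≠ invLetter a) : IsReduced (L₁ ++ L₂) := by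
  refine List.isChain_append.2 ⟨h₁, h₂, fun a ha b hb hab => ?_⟩
  have := h a ha b hb
  rcases a with ⟨x, _ | _⟩ <;> rcases b with ⟨y, _ | _⟩ <;> simp_all [invLetter]

theorem exists_letter_notMem [Nontrivial α] (s : Finset (α × Bool)) (hs : s.card ≤ 3) :
    ∃ c, c ∉ s := by
  classical
  obtain ⟨a, b, hab⟩ := exists_pair_ne α
  let t : Finset (α × Bool) := {(a, true), (a, false), (b, true), (b, false)}
  have ht : t.card = 4 := by simp [t, Finset.card_insert_of_notMem, hab]
  obtain ⟨c, -, hc⟩ := Finset.exists_mem_notMem_of_card_lt_card (s := s) (t := t) (by omega)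
  exact ⟨c, hc⟩

variable [DecidableEq α]

theorem IsReduced.invRev {L : List (α × Bool)} (h : IsReduced L) : IsReduced (invRev L) := by
  have := isReduced_toWord (x := mk (FreeGroup.invRev L))
  rwa [toWord_mk, reduce_invRev, h.reduce_eq] at this

theorem toWord_eq_of_isReduced {x : FreeGroup α} {L : List (α × Bool)} (hx : x = mk L)
    (hL : IsReduced L) : x.toWord = L := by
  rw [hx, toWord_mk, hL.reduce_eq]

theorem toWord_mul_mul_of_isReduced {x y z : FreeGroup α}
    (h : IsReduced (x.toWord ++ y.toWord ++ z.toWord)) :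
    (x * y * z).toWord = x.toWord ++ y.toWord ++ z.toWord :=
  toWord_eq_of_isReduced (by simp only [← mul_mk, mk_toWord]) h

theorem toWord_conj_of_ne_invLetter {g w : FreeGroup α} (hw : w ≠ 1)
    (h₁ : ∀ a ∈ g.toWord.getLast?, ∀ b ∈ w.toWord.head?, b ≠ invLetter a)
    (h₂ : ∀ a ∈ g.toWord.getLast?, ∀ b ∈ w.toWord.getLast?, b ≠ a) :
    (g * w * g⁻¹).toWord = g.toWord ++ w.toWord ++ invRev g.toWord := by
  rw [← toWord_inv]
  refine toWord_mul_mul_of_isReduced <|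
    isReduced_append (isReduced_append isReduced_toWord isReduced_toWord h₁) isReduced_toWord ?_
  intro b hb a' ha'
  rw [List.getLast?_append_of_ne_nil _ (toWord_eq_nil_iff.not.2 hw)] at hb
  rw [toWord_inv, head?_invRev, Option.mem_map] at ha'
  obtain ⟨a, ha, rfl⟩ := ha'
  exact invLetter_injective.ne (h₂ a ha b hb).symm

theorem toWord_inv_mul_of_eq_append {y z : FreeGroup α} {c t₁ t₂ : List (α × Bool)}
    (hy : y.toWord = c ++ t₁) (hz : z.toWord = c ++ t₂)
    (h : ∀ a ∈ t₁.head?, ∀ b ∈ t₂.head?, a ≠ b) :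
    (y⁻¹ * z).toWord = invRev t₁ ++ t₂ := by
  have ht₁ : IsReduced t₁ := isReduced_toWord.infix (hy ▸ (List.suffix_append c t₁).isInfix)
  have ht₂ : IsReduced t₂ := isReduced_toWord.infix (hz ▸ (List.suffix_append c t₂).isInfix)
  refine toWord_eq_of_isReduced ?_ (isReduced_append ht₁.invRev ht₂ ?_)
  · calc y⁻¹ * z = (mk c * mk t₁)⁻¹ * (mk c * mk t₂) := by
          rw [mul_mk, mul_mk, ← hy, ← hz, mk_toWord, mk_toWord]
      _ = (mk t₁)⁻¹ * mk t₂ := by group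
      _ = mk (invRev t₁ ++ t₂) := by rw [inv_mk, mul_mk]
  · intro a ha b hb
    rw [getLast?_invRev, Option.mem_map] at ha
    obtain ⟨a, ha, rfl⟩ := ha
    simpa using (h a ha b hb).symm

def geodesic (x y : FreeGroup α) : Set (FreeGroup α) :=
  {g | (x⁻¹ * g).toWord <+: (x⁻¹ * y).toWord}

theorem mem_geodesic_one {g y : FreeGroup α} : g ∈ geodesic 1 y ↔ g.toWord <+: y.toWord := by
  simp [geodesic]

theorem norm_inv_mul_le_of_mem_geodesic {x y g : FreeGroup α} (h : g ∈ geodesic x y) :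
    norm (x⁻¹ * g) ≤ norm (x⁻¹ * y) :=
  h.length_le

theorem geodesic_one_subset_union (y z : FreeGroup α) :
    geodesic 1 z ⊆ geodesic 1 y ∪ geodesic y z := by
  intro g hg
  rw [mem_geodesic_one] at hg
  obtain ⟨c, t₁, t₂, hy, hz, hne⟩ := List.exists_maximal_common_prefix y.toWord z.toWord
  rcases List.prefix_or_prefix_of_prefix hg (hz ▸ List.prefix_append c t₂) with hgc | ⟨s, hs⟩
  · exact .inl (mem_geodesic_one.2 (hgc.trans (hy ▸ List.prefix_append c t₁)))
  rcases s with _ | ⟨a, s⟩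
  · exact .inl (mem_geodesic_one.2 (by simp [← hs, hy]))
  obtain ⟨r, rfl⟩ : a :: s <+: t₂ := by rwa [← List.prefix_append_right_inj c, hs, ← hz]
  right
  show (y⁻¹ * g).toWord <+: (y⁻¹ * z).toWord
  rw [toWord_inv_mul_of_eq_append hy hs.symm (by simpa using hne),
    toWord_inv_mul_of_eq_append hy hz hne, List.prefix_append_right_inj]
  exact List.prefix_append _ _

theorem geodesic_subset_union (x y z : FreeGroup α) :
    geodesic x z ⊆ geodesic x y ∪ geodesic y z := by
  intro g hg
  have := geodesic_one_subset_union (x⁻¹ * y) (x⁻¹ * z)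
    (show x⁻¹ * g ∈ geodesic 1 (x⁻¹ * z) by simpa [geodesic] using hg)
  simpa [geodesic, mul_assoc] using this

theorem exists_mem_norm_inv_mul_le_of_mem_geodesic {H : Subgroup (FreeGroup α)} {L : ℕ} :
    ∀ {l : List (FreeGroup α)}, (∀ s ∈ l, s ∈ H ∧ norm s ≤ L) → ∀ {p g : FreeGroup α}, p ∈ H →
      g ∈ geodesic p (p * l.prod) → ∃ h ∈ H, norm (h⁻¹ * g) ≤ L
  | [], _, p, g, hp, hg => ⟨p, hp, (norm_inv_mul_le_of_mem_geodesic hg).trans (by simp)⟩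
  | s :: l, hl, p, g, hp, hg => by
    obtain ⟨hsH, hsL⟩ := hl s List.mem_cons_self
    rw [List.prod_cons, ← mul_assoc] at hg
    rcases geodesic_subset_union p (p * s) _ hg with hg | hg
    · exact ⟨p, hp, (norm_inv_mul_le_of_mem_geodesic hg).trans (by simpa using hsL)⟩
    · exact exists_mem_norm_inv_mul_le_of_mem_geodesic
        (fun t ht => hl t (List.mem_cons_of_mem s ht)) (H.mul_mem hp hsH) hg

def IsQuasiconvex (H : Subgroup (FreeGroup α)) : Prop :=
  ∃ L : ℕ, ∀ n ∈ H, ∀ g ∈ geodesic 1 n, ∃ h ∈ H, norm (h⁻¹ * g) ≤ L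

theorem isQuasiconvex_of_fg {H : Subgroup (FreeGroup α)} (hH : H.FG) : IsQuasiconvex H := by
  obtain ⟨S, rfl⟩ := hH
  refine ⟨S.sup norm, fun n hn g hg => ?_⟩
  rw [← Subgroup.mem_toSubmonoid, Subgroup.closure_toSubmonoid] at hn
  obtain ⟨l, hl, rfl⟩ := Submonoid.exists_list_of_mem_closure hn
  refine exists_mem_norm_inv_mul_le_of_mem_geodesic (fun s hs => ?_) (Subgroup.one_mem _)
    (by rwa [one_mul])
  rcases hl s hs with h | h
  · exact ⟨Subgroup.subset_closure h, Finset.le_sup (f := norm) h⟩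
  · exact ⟨by simpa using Subgroup.subset_closure h,
      by simpa using Finset.le_sup (f := norm) (Set.mem_inv.1 h)⟩

theorem finite_setOf_norm_le [Finite α] (L : ℕ) : {x : FreeGroup α | norm x ≤ L}.Finite :=
  (List.finite_length_le _ L).preimage toWord_injective.injOn

theorem finiteIndex_of_forall_exists_norm_le [Finite α] {H : Subgroup (FreeGroup α)} (L : ℕ)
    (hL : ∀ g, ∃ h ∈ H, norm (h⁻¹ * g) ≤ L) : H.FiniteIndex := by
  have : Finite (FreeGroup α ⧸ H) := by
    refine Set.finite_univ_iff.1
      (((finite_setOf_norm_le L).image (QuotientGroup.mk (s := H))).subset ?_)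
    rintro ⟨x⟩ -
    obtain ⟨h, hH, hh⟩ := hL x⁻¹
    refine ⟨x * h, show norm (x * h) ≤ L by rwa [← norm_inv_eq, mul_inv_rev], ?_⟩
    exact QuotientGroup.eq.2 (by simpa)
  exact Subgroup.finiteIndex_of_finite_quotient

theorem exists_mem_geodesic_one_of_normal [Nontrivial α] {H : Subgroup (FreeGroup α)} [H.Normal]
    (hH : H ≠ ⊥) (g : FreeGroup α) : ∃ n ∈ H, g ∈ geodesic 1 n := by
  obtain ⟨u, huH, hu⟩ := H.bot_or_exists_ne_one.resolve_left hH
  have hcard (o : Option (α × Bool)) : o.toFinset.card ≤ 1 := by cases o <;> simp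
  obtain ⟨c, hc⟩ := exists_letter_notMem ((g.toWord.getLast?.map invLetter).toFinset ∪
    (u.toWord.head?.map invLetter).toFinset ∪ u.toWord.getLast?.toFinset)
    ((Finset.card_union_le _ _).trans (add_le_add ((Finset.card_union_le _ _).trans
      (add_le_add (hcard _) (hcard _))) (hcard _)))
  simp only [Finset.mem_union, Option.mem_toFinset, Option.mem_map, not_or, not_exists,
    not_and] at hc
  obtain ⟨⟨hcg, hcu⟩, hcu'⟩ := hc
  have hc : (mk [c]).toWord = [c] := by simp [toWord_mk]
  set w := mk [c] * u * (mk [c])⁻¹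
  have hw : w.toWord = [c] ++ u.toWord ++ [invLetter c] := by
    rw [toWord_conj_of_ne_invLetter hu, hc]
    · rfl
    · rw [hc]
      rintro _ ⟨⟩ b hb rfl
      exact hcu _ hb (invLetter_invLetter c)
    · rw [hc]
      rintro _ ⟨⟩ b hb rfl
      exact hcu' hb
  refine ⟨g * w * g⁻¹, Subgroup.Normal.conj_mem ‹_› _ (Subgroup.Normal.conj_mem ‹_› _ huH _) _, ?_⟩
  rw [mem_geodesic_one, toWord_conj_of_ne_invLetter, List.append_assoc]
  · exact List.prefix_append _ _
  · exact fun h => by simp [h] at hw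
  · rintro a ha b hb rfl
    rw [hw] at hb
    exact hcg a ha (by simpa [eq_comm] using hb)
  · rintro a ha b hb rfl
    rw [hw, List.getLast?_concat, Option.mem_some_iff] at hb
    exact hcg _ ha (by rw [← hb, invLetter_invLetter])

end FreeGroup

theorem fg_normal_subgroup_of_free_rank_two_trivial_or_finite_index
    (N : Subgroup (FreeGroup (Fin 2))) [N.Normal] (hfg : N.FG) :
    N = ⊥ ∨ N.FiniteIndex := by
  refine or_iff_not_imp_left.2 fun hN => ?_
  obtain ⟨L, hL⟩ := FreeGroup.isQuasiconvex_of_fg hfg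
  refine FreeGroup.finiteIndex_of_forall_exists_norm_le L fun g => ?_
  obtain ⟨n, hn, hg⟩ := FreeGroup.exists_mem_geodesic_one_of_normal hN g
  exact hL n hn g hg
end

section
/- Free groups of finite rank are Hopfian: every surjective endomorphism of a finitely generated free group is an isomorphism. -/
/-!
A finitely generated residually finite group `G` is Hopfian (Mal'cev): for a finite quotient
`Q = G ⧸ N`, the set `Hom(G, Q)` is finite, and precomposition with a surjection `f : G → G` is
injective on it, hence bijective. So the projection `G → Q` factors through `f` and kills
`ker f`; as `N` ranges over the finite-index normal subgroups, `ker f` is trivial.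

Free groups are residually finite. A reduced word `w` of length `n > 0` spells a path on the
vertices `0, …, n`. Because `w` is reduced, the edges carrying a given generator form a partial
injection of the vertices, which extends to a permutation; the resulting action of the free group
on `n + 1` points moves the vertex `n` to `0` under `w`.
-/

open Function

theorem Equiv.Perm.exists_extend_of_functional_of_injective {X : Type*} [Finite X]
    (R : X → X → Prop) (functional : ∀ a b b', R a b → R a b' → b = b')
    (injective : ∀ a a' b, R a b → R a' b → a = a') :
    ∃ σ : Perm X, ∀ a b, R a b → σ a = b := by
  classical
  let f : {a // ∃ b, R a b} → X := fun a => a.2.choose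
  have hf : Injective f := fun a a' h =>
    Subtype.ext (injective _ _ (f a) a.2.choose_spec (h ▸ a'.2.choose_spec))
  refine ⟨(Equiv.ofInjective f hf).extendSubtype, fun a b hab => ?_⟩
  rw [extendSubtype_apply_of_mem _ a ⟨b, hab⟩]
  exact functional _ _ _ (⟨b, hab⟩ : ∃ b, R a b).choose_spec hab

instance MonoidHom.finite_of_fg {G H : Type*} [Group G] [Group.FG G] [Monoid H] [Finite H] :
    Finite (G →* H) := by
  obtain ⟨S, hS⟩ := Group.fg_def.mp ‹_›
  refine Finite.of_injective (fun f : G →* H => fun s : S => f s) fun f g hfg => ?_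
  exact MonoidHom.eq_of_eqOn_dense hS fun s hs => congrFun hfg ⟨s, hs⟩

theorem Group.ResiduallyFinite.injective_of_surjective {G : Type*} [Group G] [Group.FG G]
    [Group.ResiduallyFinite G] {f : G →* G} (hf : Surjective f) : Injective f := by
  refine (injective_iff_map_eq_one f).mpr fun g hg => ?_
  by_contra hne
  obtain ⟨N, hgN⟩ := Group.exists_finiteIndexNormalSubgroup_notMem g hne
  have hcomp : Injective fun ψ : G →* G ⧸ N.toSubgroup => ψ.comp f :=
    fun _ _ h => (MonoidHom.cancel_right hf).mp h
  obtain ⟨ψ, hψ⟩ := Finite.injective_iff_surjective.mp hcomp (QuotientGroup.mk' N.toSubgroup)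
  have hg_ker : QuotientGroup.mk' N.toSubgroup g = 1 := by rw [← hψ]; simp [hg]
  exact hgN ((QuotientGroup.eq_one_iff g).mp hg_ker)

namespace FreeGroup

variable {α : Type*}

/-- The letter `L[s] = (i, true)` is an `i`-edge from `s + 1` to `s`, and `L[s] = (i, false)` an
`i`-edge from `s` to `s + 1`, so that reading `mk L` from right to left walks from `L.length`
to `0`. -/
def WordEdge (L : List (α × Bool)) (i : α) (u v : ℕ) : Prop :=
  ∃ s, ∃ hs : s < L.length,
    (L[s] = (i, true) ∧ u = s + 1 ∧ v = s) ∨ (L[s] = (i, false) ∧ u = s ∧ v = s + 1)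

theorem IsReduced.snd_eq_of_fst_eq {L : List (α × Bool)} (hL : IsReduced L) {s : ℕ}
    (hs : s + 1 < L.length) (h : L[s].1 = L[s + 1].1) : L[s].2 = L[s + 1].2 :=
  List.IsChain.getElem hL s hs h

variable {L : List (α × Bool)} {i : α}

-- Two distinct `i`-edges at a common vertex would be adjacent letters `(i, b) (i, !b)`.
theorem IsReduced.wordEdge_functional (hL : IsReduced L) {u v v' : ℕ}
    (h : WordEdge L i u v) (h' : WordEdge L i u v') : v = v' := by
  obtain ⟨s, hs, h⟩ := h
  obtain ⟨t, ht, h'⟩ := h'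
  grind [IsReduced.snd_eq_of_fst_eq]

theorem IsReduced.wordEdge_injective (hL : IsReduced L) {u u' v : ℕ}
    (h : WordEdge L i u v) (h' : WordEdge L i u' v) : u = u' := by
  obtain ⟨s, hs, h⟩ := h
  obtain ⟨t, ht, h'⟩ := h'
  grind [IsReduced.snd_eq_of_fst_eq]

theorem lift_mk_drop_apply_last {σ : α → Equiv.Perm (Fin (L.length + 1))}
    (hσ : ∀ i (u v : Fin (L.length + 1)), WordEdge L i u v → σ i u = v) {s : ℕ}
    (hs : s ≤ L.length) : lift σ (mk (L.drop s)) (Fin.last _) = ⟨s, by omega⟩ := by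
  induction hs using Nat.decreasingInduction with
  | self => simp [Fin.last]
  | of_succ s hs ih =>
    rw [List.drop_eq_getElem_cons hs, ← List.singleton_append, ← mul_mk, _root_.map_mul,
      Equiv.Perm.mul_apply, ih, lift_mk]
    rcases hx : L[s] with ⟨j, _ | _⟩
    · simp only [List.map_singleton, List.prod_singleton, cond_false]
      exact (Equiv.symm_apply_eq _).mpr
        (hσ j ⟨s, by omega⟩ ⟨s + 1, by omega⟩ ⟨s, hs, .inr ⟨hx, rfl, rfl⟩⟩).symm
    · simp only [List.map_singleton, List.prod_singleton, cond_true]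
      exact hσ j ⟨s + 1, by omega⟩ ⟨s, by omega⟩ ⟨s, hs, .inl ⟨hx, rfl, rfl⟩⟩

theorem exists_monoidHom_perm_ne_one [DecidableEq α] {w : FreeGroup α} (hw : w ≠ 1) :
    ∃ (n : ℕ) (ψ : FreeGroup α →* Equiv.Perm (Fin n)), ψ w ≠ 1 := by
  set L := w.toWord
  have hL : IsReduced L := isReduced_toWord
  have hlen : 0 < L.length := List.length_pos_iff.mpr (toWord_eq_nil_iff.not.mpr hw)
  have hperm (i : α) : ∃ σ : Equiv.Perm (Fin (L.length + 1)),
      ∀ u v : Fin (L.length + 1), WordEdge L i u v → σ u = v :=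
    Equiv.Perm.exists_extend_of_functional_of_injective _
      (fun _ _ _ h h' => Fin.ext (hL.wordEdge_functional h h'))
      (fun _ _ _ h h' => Fin.ext (hL.wordEdge_injective h h'))
  choose σ hσ using hperm
  refine ⟨L.length + 1, lift σ, fun h => ?_⟩
  have hmove := lift_mk_drop_apply_last hσ (Nat.zero_le _)
  rw [List.drop_zero, mk_toWord, h] at hmove
  simp only [Equiv.Perm.one_apply, Fin.ext_iff, Fin.val_last] at hmove
  omega

instance : Group.ResiduallyFinite (FreeGroup α) := by
  classical
  refine Group.residuallyFinite_iff_exists_finiteIndex.mpr fun w hw => ?_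
  obtain ⟨n, ψ, hψ⟩ := exists_monoidHom_perm_ne_one hw
  exact ⟨ψ.ker, Subgroup.finiteIndex_ker ψ, by simpa using hψ⟩

end FreeGroup

/-- Finitely generated free groups are Hopfian. -/
theorem freeGroup_hopfian (k : ℕ)
    (φ : FreeGroup (Fin k) →* FreeGroup (Fin k)) (hφ : Function.Surjective φ) :
    Function.Bijective φ :=
  ⟨Group.ResiduallyFinite.injective_of_surjective hφ, hφ⟩
end

section
/- In a free group F, any two commuting elements x, y lie in a common cyclic subgroup; that is, if xy = yx then there exists z ∈ F and integers m, n with x = zᵐ and y = zⁿ. -/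
open FreeGroup

/-- Distinct generators of a free group do not commute. -/
lemma of_not_commute {ι : Type*} {a b : ι} (hab : a ≠ b) :
    FreeGroup.of a * FreeGroup.of b ≠ FreeGroup.of b * FreeGroup.of a := by
  classical
  intro h
  let s1 : Equiv.Perm (Fin 3) := Equiv.swap 0 1
  let s2 : Equiv.Perm (Fin 3) := Equiv.swap 1 2
  let f : FreeGroup ι →* Equiv.Perm (Fin 3) :=
    FreeGroup.lift (fun i => if i = a then s1 else if i = b then s2 else 1)
  have ha : f (FreeGroup.of a) = s1 := by simp [f]
  have hb : f (FreeGroup.of b) = s2 := by simp [f, hab.symm]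
  have := congrArg f h
  rw [f.map_mul, f.map_mul, ha, hb] at this
  have : s1 * s2 = s2 * s1 := this
  exact absurd this (by decide)

/-- Every element of a free group over a subsingleton is a power of a generator. -/
lemma free_subsingleton_pow {ι : Type*} [Subsingleton ι] (a : ι) (w : FreeGroup ι) :
    ∃ n : ℤ, w = FreeGroup.of a ^ n := by
  let f : FreeGroup ι →* FreeGroup Unit := FreeGroup.map (fun _ => ())
  let g : FreeGroup Unit →* FreeGroup ι := FreeGroup.map (fun _ => a)
  refine ⟨freeGroupUnitEquivInt (f w), ?_⟩
  have h1 : FreeGroup.of () ^ (freeGroupUnitEquivInt (f w)) = f w :=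
    freeGroupUnitEquivInt.symm_apply_apply (f w)
  have h2 : g (f w) = w := by
    rw [show g (f w) = FreeGroup.map ((fun _ => a) ∘ (fun _ => ())) w from FreeGroup.map.comp _ _ _]
    have : ((fun _ => a) ∘ (fun _ : ι => ())) = id := funext fun i => Subsingleton.elim _ _
    rw [this, FreeGroup.map.id]
  calc w = g (f w) := h2.symm
    _ = g (FreeGroup.of () ^ (freeGroupUnitEquivInt (f w))) := by rw [h1]
    _ = FreeGroup.of a ^ (freeGroupUnitEquivInt (f w)) := by
        rw [map_zpow, FreeGroup.map.of]

/-- In a free group, two commuting elements lie in a common cyclic subgroup. -/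
theorem commuting_elements_common_cyclic {α : Type*} (x y : FreeGroup α)
    (hxy : x * y = y * x) :
    ∃ (z : FreeGroup α) (m n : ℤ), x = z ^ m ∧ y = z ^ n := by
  set H : Subgroup (FreeGroup α) := Subgroup.closure {x, y} with hH
  have hxH : x ∈ H := Subgroup.subset_closure (by simp)
  have hyH : y ∈ H := Subgroup.subset_closure (by simp)
  -- H is commutative
  have hcomm : ∀ a ∈ H, ∀ b ∈ H, a * b = b * a := by
    intro a ha b hb
    induction ha, hb using Subgroup.closure_induction₂ with
    | mem u v hu hv =>
      rcases hu with rfl | rfl <;> rcases hv with rfl | rfl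
      · rfl
      · exact hxy
      · exact hxy.symm
      · rfl
    | one_left => simp
    | one_right => simp
    | mul_left u v w _ _ _ h1 h2 => rw [mul_assoc, h2, ← mul_assoc, h1, mul_assoc]
    | mul_right u v w _ _ _ h1 h2 => rw [← mul_assoc, h1, mul_assoc, h2, ← mul_assoc]
    | inv_left u v _ _ h =>
      rw [eq_comm, mul_inv_eq_iff_eq_mul, mul_assoc, ← h, ← mul_assoc, inv_mul_cancel, one_mul]
    | inv_right u v _ _ h =>
      rw [mul_inv_eq_iff_eq_mul, mul_assoc, h, ← mul_assoc, inv_mul_cancel, one_mul]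
  -- H is free (Nielsen-Schreier) with commuting generators, so generators are a subsingleton
  haveI : IsFreeGroup H := inferInstance
  let b := IsFreeGroup.basis H
  haveI : Subsingleton (IsFreeGroup.Generators H) := by
    constructor
    intro i j
    by_contra hij
    apply of_not_commute hij
    have : (b i) * (b j) = (b j) * (b i) := by
      have := hcomm (b i) (b i).2 (b j) (b j).2
      exact Subtype.ext this
    have := congrArg b.repr this
    simpa using this
  -- so H is "cyclic" generated by some element
  rcases isEmpty_or_nonempty (IsFreeGroup.Generators H) with he | hne
  · -- H is trivial
    haveI : Unique (FreeGroup (IsFreeGroup.Generators H)) := inferInstance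
    have hx1 : x = 1 := by
      have : b.repr ⟨x, hxH⟩ = b.repr 1 := Subsingleton.elim _ _
      have := b.repr.injective this
      simpa using congrArg (Subtype.val) this
    have hy1 : y = 1 := by
      have : b.repr ⟨y, hyH⟩ = b.repr 1 := Subsingleton.elim _ _
      have := b.repr.injective this
      simpa using congrArg (Subtype.val) this
    exact ⟨1, 0, 0, by simp [hx1], by simp [hy1]⟩
  · obtain ⟨a⟩ := hne
    refine ⟨(b a : FreeGroup α), ?_⟩
    obtain ⟨m, hm⟩ := free_subsingleton_pow a (b.repr ⟨x, hxH⟩)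
    obtain ⟨n, hn⟩ := free_subsingleton_pow a (b.repr ⟨y, hyH⟩)
    refine ⟨m, n, ?_, ?_⟩
    · have : (⟨x, hxH⟩ : H) = (b a) ^ m := by
        apply b.repr.injective
        rw [hm, map_zpow, b.repr_apply_coe]
      have := congrArg (Subtype.val) this
      simpa using this
    · have : (⟨y, hyH⟩ : H) = (b a) ^ n := by
        apply b.repr.injective
        rw [hn, map_zpow, b.repr_apply_coe]
      have := congrArg (Subtype.val) this
      simpa using this
end
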